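/- arXiv:2509.07955 — 2 statements merged into one kernel-verified Lean document; each statement's English description precedes it below -/
import Mathlib

section
/- (ACE proper scoring, sufficiency) If for every disagreement group g the lower-bound count k_g = ⌊N·r̄_g⌋ does not exceed the true number of instances in group g, then the true concept assignment achieves zero ACE top-k loss; since the ACE loss is nonnegative, the true distribution is a global minimizer. -/
/-- Extended negative logarithm: `-log r` for `r ∈ (0, 1]`, and `⊤` for
`r ≤ 0` (so `-log 0 = +∞`, as required for cross-entropy losses). -/
noncomputable def negLog (r : ℝ) : ENNReal :=
  if r ≤ 0 then ⊤ else ENNReal.ofReal (-Real.log r)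

theorem negLog_one : negLog 1 = 0 := by
  simp [negLog]

theorem Finset.exists_card_eq_forall_of_le_card_filter {α : Type*} {s : Finset α}
    {p : α → Prop} [DecidablePred p] {k : ℕ} (hk : k ≤ (s.filter p).card) :
    ∃ t : Finset α, t.card = k ∧ ∀ i ∈ t, p i := by
  obtain ⟨t, hts, htk⟩ := Finset.exists_subset_card_eq hk
  exact ⟨t, htk, fun i hi => (Finset.mem_filter.mp (hts hi)).2⟩

theorem ite_one_zero_le_of_pos {R : Type*} [Zero R] [One R] [Preorder R] [ZeroLEOneClass R]
    {p q : Prop} [Decidable p] [Decidable q] (hp : p) :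
    (if q then (1 : R) else 0) ≤ if p then 1 else 0 := by
  rw [if_pos hp]
  split_ifs
  exacts [le_rfl, zero_le_one]

/-- (ACE proper scoring, sufficiency.) If for every disagreement group `g`
the lower-bound count `k g` does not exceed the true number of instances in
group `g`, then for each group there is a valid top-k selection under the
true deterministic concept distribution consisting only of true group-`g`
members, and it attains zero ACE loss; moreover the ACE loss of any
classifier pair is nonnegative, so the true distribution is a global
minimizer. -/
theorem ace_proper_scoring_sufficiency (N : ℕ) (C1 C2 : Fin N → Bool)
    (k : Bool × Bool → ℕ)
    (hk : ∀ g : Bool × Bool, g.1 ≠ g.2 →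
      k g ≤ (Finset.univ.filter (fun i : Fin N => (C1 i, C2 i) = g)).card) :
    (∀ g : Bool × Bool, g.1 ≠ g.2 → ∃ S : Finset (Fin N),
      S.card = k g ∧
      (∀ i ∈ S, (C1 i, C2 i) = g) ∧
      (∀ i ∈ S, ∀ j ∉ S,
        (if (C1 j, C2 j) = g then (1:ℝ) else 0) ≤ (if (C1 i, C2 i) = g then (1:ℝ) else 0)) ∧
      (∑ i ∈ S, (negLog (if C1 i = g.1 then (1:ℝ) else 0)
          + negLog (if C2 i = g.2 then (1:ℝ) else 0))) = 0)
    ∧ ∀ (p1 p2 : Fin N → Bool → ℝ) (g : Bool × Bool) (S : Finset (Fin N)),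
        0 ≤ ∑ i ∈ S, (negLog (p1 i g.1) + negLog (p2 i g.2)) := by
  refine ⟨fun g hg => ?_, fun _ _ _ _ => zero_le⟩
  obtain ⟨S, hcard, hmem⟩ := Finset.exists_card_eq_forall_of_le_card_filter (hk g hg)
  refine ⟨S, hcard, hmem, fun i hi _ _ => ite_one_zero_le_of_pos (hmem i hi),
    Finset.sum_eq_zero fun i hi => ?_⟩
  obtain ⟨h1, h2⟩ := Prod.ext_iff.mp (hmem i hi)
  rw [if_pos h1, if_pos h2, negLog_one, add_zero]
end

section
/- (ACE proper scoring, necessity) If for some disagreement group g the lower-bound count k_g exceeds the true number n_g of instances in group g, then the true concept distribution incurs strictly positive ACE top-k loss (in particular, the loss selects an instance not in group g, contributing −log 0 = +∞), so ACE fails to be a proper scoring rule. -/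
theorem negLog_zero : negLog 0 = ⊤ := by
  simp [negLog]

/-- `if a = g.1 then 1 else 0` is the probability that the deterministic true concept
distribution at an instance with concept `a` assigns to the value `g.1`. -/
theorem negLog_ite_add_negLog_ite_eq_top {α β : Type*} [DecidableEq α] [DecidableEq β]
    {a : α} {b : β} {g : α × β} (h : (a, b) ≠ g) :
    negLog (if a = g.1 then (1 : ℝ) else 0) + negLog (if b = g.2 then (1 : ℝ) else 0) = ⊤ := by
  obtain ⟨g₁, g₂⟩ := g
  rw [Ne, Prod.mk.injEq, not_and_or] at h
  rcases h with h | h <;> simp [h, negLog_zero]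

theorem Finset.exists_mem_not_of_card_filter_lt {ι : Type*} [Fintype ι] {p : ι → Prop}
    [DecidablePred p] {S : Finset ι} (h : (univ.filter p).card < S.card) : ∃ i ∈ S, ¬ p i := by
  obtain ⟨i, hiS, hi⟩ := exists_mem_notMem_of_card_lt_card h
  exact ⟨i, hiS, by simpa using hi⟩

theorem ace_proper_scoring_necessity_general (N : ℕ) (C1 C2 : Fin N → Bool)
    (g : Bool × Bool) (kg : ℕ)
    (hk : (Finset.univ.filter (fun i : Fin N => (C1 i, C2 i) = g)).card < kg) :
    ∀ S : Finset (Fin N), S.card = kg →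
      (∃ i ∈ S, (C1 i, C2 i) ≠ g) ∧
      0 < ∑ i ∈ S, (negLog (if C1 i = g.1 then (1:ℝ) else 0)
          + negLog (if C2 i = g.2 then (1:ℝ) else 0)) := by
  rintro S rfl
  obtain ⟨i, hiS, hi⟩ := Finset.exists_mem_not_of_card_filter_lt hk
  have hsum_top : ∑ j ∈ S, (negLog (if C1 j = g.1 then (1:ℝ) else 0)
      + negLog (if C2 j = g.2 then (1:ℝ) else 0)) = ⊤ :=
    ENNReal.sum_eq_top.mpr ⟨i, hiS, negLog_ite_add_negLog_ite_eq_top hi⟩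
  exact ⟨⟨i, hiS, hi⟩, hsum_top ▸ WithTop.top_pos⟩

/-- (ACE proper scoring, necessity.) If for some disagreement group `g` the
lower-bound count `k g` exceeds the true number of instances in group `g`
(while `k g ≤ N`), then any selection of `k g` indices must include an
instance not in group `g`, and the true concept distribution incurs strictly
positive (indeed infinite, via `−log 0 = +∞`) ACE top-k loss there — so ACE
fails to attain the global minimum of `0` on the true distribution. -/
theorem ace_proper_scoring_necessity (N : ℕ) (C1 C2 : Fin N → Bool)
    (g : Bool × Bool) (hg : g.1 ≠ g.2) (kg : ℕ) (hkN : kg ≤ N)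
    (hk : (Finset.univ.filter (fun i : Fin N => (C1 i, C2 i) = g)).card < kg) :
    ∀ S : Finset (Fin N), S.card = kg →
      (∃ i ∈ S, (C1 i, C2 i) ≠ g) ∧
      0 < ∑ i ∈ S, (negLog (if C1 i = g.1 then (1:ℝ) else 0)
          + negLog (if C2 i = g.2 then (1:ℝ) else 0)) :=
  ace_proper_scoring_necessity_general N C1 C2 g kg hk
end
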